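/- arXiv:1401.0189 — 2 statements merged into one kernel-verified Lean document; each statement's English description precedes it below -/
import Mathlib

section
/- Let n = 2m and for each admissible set S let m_S denote the multilinear monomial equal to the partial derivative of IMM_{n,n} with respect to S. Then the set of monomials { ∂IMM_{n,n}/∂(S ∪ T) : S admissible, T ⊆ var(m_S) } is a downward-closed set of multilinear monomials: if m belongs to this set and m′ is a multilinear monomial with var(m′) ⊆ var(m), then m′ also belongs to this set. -/
/-!
Every variable occurs in `IMM_{n,n}` with degree at most one, because each monomial takes
exactly one entry from each of the `n` matrices. A partial derivative never raises the degree
in a variable and lowers it in the variable differentiated, so `∂_S IMM = ∏_{v ∈ VS} X v`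
forces `S` and `VS` to be disjoint, and then `∂_{S ∪ T} IMM = ∏_{v ∈ VS \ T} X v`.
A submonomial `∏_{v ∈ V'} X v` with `V' ⊆ VS \ T` is therefore `∂_{S ∪ (VS \ V')} IMM`,
with the same admissible `S`.
-/

open MvPolynomial

noncomputable section

/-- The iterated matrix multiplication polynomial `IMM_{n,n}`. -/
def IMM (n : ℕ) (K : Type*) [CommSemiring K] : MvPolynomial (Fin n × Fin n × Fin n) K :=
  if h : 0 < n then
    (((List.finRange n).map fun k =>
      Matrix.of fun i j => (X (k, i, j) : MvPolynomial (Fin n × Fin n × Fin n) K)).prod)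
      ⟨0, h⟩ ⟨0, h⟩
  else 0

/-- Iterated partial derivative with respect to a finite set of variables. -/
def pderivFinset {σ : Type*} {K : Type*} [CommSemiring K] (D : Finset σ)
    (f : MvPolynomial σ K) : MvPolynomial σ K :=
  D.toList.foldr (fun v g => pderiv v g) f

/-- A set `S` of variables of `IMM_{n,n}` is admissible if it consists of exactly one
variable from the first row of the first matrix and exactly one variable from each of
the other odd-indexed (`1`-based, even `0`-based) matrices. -/
def IsAdmissible (n : ℕ) (S : Finset (Fin n × Fin n × Fin n)) : Prop :=
  (∀ v ∈ S, Even v.1.val) ∧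
  (∀ k : Fin n, Even k.val → (S.filter fun v => v.1 = k).card = 1) ∧
  (∀ v ∈ S, v.1.val = 0 → v.2.1.val = 0)

namespace MvPolynomial

variable {σ R : Type*} [CommSemiring R]

theorem pderiv_comm (i j : σ) (f : MvPolynomial σ R) :
    pderiv i (pderiv j f) = pderiv j (pderiv i f) := by
  classical
  ext m
  simp only [coeff_pderiv, Finsupp.add_apply, Finsupp.single_apply]
  rw [add_right_comm m]
  rcases eq_or_ne j i with rfl | hij
  · rfl
  · simp [hij, hij.symm]
    ring

instance : LeftCommutative (fun (i : σ) (f : MvPolynomial σ R) => pderiv i f) :=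
  ⟨pderiv_comm⟩

theorem pderiv_prod_X_of_notMem {W : Finset σ} {i : σ} (h : i ∉ W) :
    pderiv i (∏ v ∈ W, (X v : MvPolynomial σ R)) = 0 := by
  classical
  induction W using Finset.induction_on with
  | empty => simp
  | insert a W haW ih =>
    rw [Finset.mem_insert, not_or] at h
    rw [Finset.prod_insert haW, pderiv_mul, pderiv_X_of_ne (Ne.symm h.1), ih h.2]
    simp

theorem pderiv_prod_X_of_mem [DecidableEq σ] {W : Finset σ} {i : σ} (h : i ∈ W) :
    pderiv i (∏ v ∈ W, (X v : MvPolynomial σ R)) = ∏ v ∈ W.erase i, X v := by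
  rw [← Finset.mul_prod_erase W _ h, pderiv_mul, pderiv_prod_X_of_notMem (W.notMem_erase i),
    pderiv_X_self]
  simp

theorem add_single_mem_support_of_mem_support_pderiv [DecidableEq σ] {j : σ}
    {f : MvPolynomial σ R} {m : σ →₀ ℕ} (hm : m ∈ (pderiv j f).support) :
    m + Finsupp.single j 1 ∈ f.support := by
  rw [mem_support_iff, coeff_pderiv] at hm
  exact mem_support_iff.mpr (left_ne_zero_of_mul hm)

theorem degreeOf_X_le [DecidableEq σ] (i j : σ) :
    degreeOf i (X j : MvPolynomial σ R) ≤ if i = j then 1 else 0 := by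
  rw [degreeOf_def, ← Multiset.count_singleton]
  exact Multiset.count_le_of_le i (degrees_X' j)

theorem degreeOf_pderiv_le (i j : σ) (f : MvPolynomial σ R) :
    degreeOf i (pderiv j f) ≤ degreeOf i f := by
  classical
  refine degreeOf_le_iff.mpr fun m hm => le_trans ?_ <|
    le_degreeOf_of_mem_support i (add_single_mem_support_of_mem_support_pderiv hm)
  simp

theorem degreeOf_pderiv_self_le (i : σ) (f : MvPolynomial σ R) :
    degreeOf i (pderiv i f) ≤ degreeOf i f - 1 := by
  classical
  refine degreeOf_le_iff.mpr fun m hm => ?_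
  have := le_degreeOf_of_mem_support i (add_single_mem_support_of_mem_support_pderiv hm)
  simp only [Finsupp.add_apply, Finsupp.single_eq_same] at this
  omega

theorem degreeOf_prod_X [Nontrivial R] [DecidableEq σ] (i : σ) (W : Finset σ) :
    degreeOf i (∏ v ∈ W, (X v : MvPolynomial σ R)) = if i ∈ W then 1 else 0 := by
  have hmon : ∏ v ∈ W, (X v : MvPolynomial σ R) =
      monomial (∑ v ∈ W, Finsupp.single v 1) 1 := (monomial_sum_one W _).symm
  rw [hmon, degreeOf_monomial_eq _ _ one_ne_zero]
  simp [Finsupp.single_apply]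

theorem prod_X_injective [Nontrivial R] :
    Function.Injective fun W : Finset σ => ∏ v ∈ W, (X v : MvPolynomial σ R) := by
  classical
  intro W W' h
  ext i
  have := congrArg (degreeOf i) h
  simp only [degreeOf_prod_X] at this
  split_ifs at this <;> simp_all

end MvPolynomial

section pderivFinset

variable {σ R : Type*} [CommSemiring R]

theorem pderivFinset_eq_foldr (D : Finset σ) (f : MvPolynomial σ R) :
    pderivFinset D f = D.val.foldr (fun i g => pderiv i g) f := by
  rw [pderivFinset, ← Multiset.coe_foldr, Finset.coe_toList]

theorem pderivFinset_insert [DecidableEq σ] {D : Finset σ} {i : σ} (h : i ∉ D)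
    (f : MvPolynomial σ R) : pderivFinset (insert i D) f = pderiv i (pderivFinset D f) := by
  rw [pderivFinset_eq_foldr, pderivFinset_eq_foldr, Finset.insert_val_of_notMem h,
    Multiset.foldr_cons]

theorem pderivFinset_union [DecidableEq σ] {A B : Finset σ} (h : Disjoint A B)
    (f : MvPolynomial σ R) : pderivFinset (A ∪ B) f = pderivFinset B (pderivFinset A f) := by
  rw [← Finset.disjUnion_eq_union A B h, pderivFinset_eq_foldr, Finset.disjUnion_val,
    add_comm, Multiset.foldr_add, pderivFinset_eq_foldr, pderivFinset_eq_foldr]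

theorem pderivFinset_prod_X [DecidableEq σ] {D W : Finset σ} (h : D ⊆ W) :
    pderivFinset D (∏ v ∈ W, (X v : MvPolynomial σ R)) = ∏ v ∈ W \ D, X v := by
  induction D using Finset.induction_on with
  | empty => simp [pderivFinset]
  | insert i D hiD ih =>
    have hiW : i ∈ W \ D := Finset.mem_sdiff.mpr ⟨h (D.mem_insert_self i), hiD⟩
    rw [pderivFinset_insert hiD, ih ((D.subset_insert i).trans h), pderiv_prod_X_of_mem hiW,
      Finset.sdiff_insert]

theorem degreeOf_pderivFinset_le (i : σ) (D : Finset σ) (f : MvPolynomial σ R) :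
    degreeOf i (pderivFinset D f) ≤ degreeOf i f := by
  classical
  induction D using Finset.induction_on with
  | empty => simp [pderivFinset]
  | insert j D hjD ih => exact (pderivFinset_insert hjD f ▸ degreeOf_pderiv_le i j _).trans ih

theorem degreeOf_pderivFinset_of_mem {i : σ} {D : Finset σ} (h : i ∈ D)
    (f : MvPolynomial σ R) :
    degreeOf i (pderivFinset D f) ≤ degreeOf i f - 1 := by
  classical
  rw [← Finset.insert_erase h, pderivFinset_insert (D.notMem_erase i)]
  exact (degreeOf_pderiv_self_le i _).trans <|
    Nat.sub_le_sub_right (degreeOf_pderivFinset_le i _ f) 1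

theorem disjoint_of_pderivFinset_eq_prod_X [Nontrivial R] {f : MvPolynomial σ R}
    (hf : ∀ i, degreeOf i f ≤ 1) {D W : Finset σ} (h : pderivFinset D f = ∏ v ∈ W, X v) :
    Disjoint D W := by
  classical
  refine Finset.disjoint_left.mpr fun i hiD hiW => ?_
  have hdrop := degreeOf_pderivFinset_of_mem hiD f
  rw [h, degreeOf_prod_X, if_pos hiW] at hdrop
  have hle := hf i
  omega

end pderivFinset

section IMM

variable {n : ℕ} (K : Type*) [CommSemiring K]

def varMatrix (k : Fin n) : Matrix (Fin n) (Fin n) (MvPolynomial (Fin n × Fin n × Fin n) K) :=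
  Matrix.of fun i j => X (k, i, j)

variable {K}

theorem degreeOf_prod_varMatrix_apply_le (l : List (Fin n)) (hl : l.Nodup)
    (v : Fin n × Fin n × Fin n) (i j : Fin n) :
    degreeOf v ((l.map (varMatrix K)).prod i j) ≤ if v.1 ∈ l then 1 else 0 := by
  classical
  induction l generalizing i with
  | nil =>
    rw [List.map_nil, List.prod_nil, Matrix.one_apply]
    split_ifs <;> simp
  | cons a l ih =>
    rw [List.map_cons, List.prod_cons, Matrix.mul_apply]
    refine (degreeOf_sum_le _ _ _).trans (Finset.sup_le fun t _ => ?_)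
    refine (degreeOf_mul_le _ _ _).trans ?_
    have hX := degreeOf_X_le (R := K) v (a, i, t)
    have hP := ih hl.of_cons t
    have haL := (List.nodup_cons.mp hl).1
    rw [varMatrix, Matrix.of_apply]
    by_cases hva : v.1 = a
    · rw [hva, if_neg haL] at hP
      rw [hva, if_pos List.mem_cons_self]
      split_ifs at hX <;> omega
    · have hv : v ≠ (a, i, t) := fun h => hva (by rw [h])
      rw [if_neg hv] at hX
      simp only [List.mem_cons, hva, false_or]
      omega

theorem degreeOf_IMM_le_one (v : Fin n × Fin n × Fin n) : degreeOf v (IMM n K) ≤ 1 := by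
  rw [IMM]
  split_ifs
  · exact (degreeOf_prod_varMatrix_apply_le _ (List.nodup_finRange n) v _ _).trans
      (by split_ifs <;> simp)
  · simp

end IMM

theorem pderiv_IMM_downward_closed_general
    (K : Type*) [Field K] (n : ℕ)
    (S : Finset (Fin n × Fin n × Fin n)) (hS : IsAdmissible n S)
    (VS : Finset (Fin n × Fin n × Fin n))
    (hVS : pderivFinset S (IMM n K) = ∏ v ∈ VS, X v)
    (T : Finset (Fin n × Fin n × Fin n)) (hT : T ⊆ VS)
    (V : Finset (Fin n × Fin n × Fin n))
    (hV : pderivFinset (S ∪ T) (IMM n K) = ∏ v ∈ V, X v)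
    (V' : Finset (Fin n × Fin n × Fin n)) (hV' : V' ⊆ V) :
    ∃ (S' T' VS' : Finset (Fin n × Fin n × Fin n)),
      IsAdmissible n S' ∧
      pderivFinset S' (IMM n K) = ∏ v ∈ VS', X v ∧
      T' ⊆ VS' ∧
      pderivFinset (S' ∪ T') (IMM n K) = ∏ v ∈ V', X v := by
  have hdisj : Disjoint S VS := disjoint_of_pderivFinset_eq_prod_X degreeOf_IMM_le_one hVS
  have hV_eq : V = VS \ T := prod_X_injective (R := K) <| hV.symm.trans <| by
    rw [pderivFinset_union (hdisj.mono_right hT), hVS, pderivFinset_prod_X hT]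
  have hV'VS : V' ⊆ VS := hV'.trans (hV_eq ▸ Finset.sdiff_subset)
  refine ⟨S, VS \ V', VS, hS, hVS, Finset.sdiff_subset, ?_⟩
  rw [pderivFinset_union (hdisj.mono_right Finset.sdiff_subset), hVS,
    pderivFinset_prod_X Finset.sdiff_subset, Finset.sdiff_sdiff_eq_self hV'VS]

/-- Downward closedness of the monomial set
`{∂IMM_{n,n}/∂(S ∪ T) : S admissible, T ⊆ var(m_S)}` for `n = 2m`: if
`m = ∂IMM/∂(S ∪ T)` is the multilinear monomial `∏_{v ∈ V} X v` for an admissible `S`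
and `T ⊆ var(m_S)` (where `m_S = ∂IMM/∂S = ∏_{v ∈ V_S} X v`), then for any `V' ⊆ V` the
monomial `∏_{v ∈ V'} X v` is again of the form `∂IMM/∂(S' ∪ T')` with `S'` admissible
and `T' ⊆ var(m_{S'})`. -/
theorem pderiv_IMM_downward_closed
    (m : ℕ) (hm : 0 < m) (K : Type*) [Field K] (n : ℕ) (hn : n = 2 * m)
    (S : Finset (Fin n × Fin n × Fin n)) (hS : IsAdmissible n S)
    (VS : Finset (Fin n × Fin n × Fin n))
    (hVS : pderivFinset S (IMM n K) = ∏ v ∈ VS, X v)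
    (T : Finset (Fin n × Fin n × Fin n)) (hT : T ⊆ VS)
    (V : Finset (Fin n × Fin n × Fin n))
    (hV : pderivFinset (S ∪ T) (IMM n K) = ∏ v ∈ V, X v)
    (V' : Finset (Fin n × Fin n × Fin n)) (hV' : V' ⊆ V) :
    ∃ (S' T' VS' : Finset (Fin n × Fin n × Fin n)),
      IsAdmissible n S' ∧
      pderivFinset S' (IMM n K) = ∏ v ∈ VS', X v ∧
      T' ⊆ VS' ∧
      pderivFinset (S' ∪ T') (IMM n K) = ∏ v ∈ V', X v :=
  pderiv_IMM_downward_closed_general K n S hS VS hVS T hT V hV V' hV'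
end
end

section
/- Let n = 2m and let q be a prime power. The F_q-linear span, inside the space of all functions F_q^{n³} → F_q, of the evaluation functions of the monomials { m_S : S admissible } has dimension exactly n^{n−1}. Consequently, the F_q-linear span of the evaluation functions of the partial derivatives of IMM_{n,n} (with coefficients in F_q) has dimension at least n^{n−1}. -/
open MvPolynomial

noncomputable section

/-- Iterated partial derivative with respect to a list of variables (arbitrary
multi-indices correspond to such lists). -/
def pderivList {σ : Type*} {K : Type*} [CommSemiring K] (l : List σ)
    (f : MvPolynomial σ K) : MvPolynomial σ K :=
  l.foldr (fun v g => pderiv v g) f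

/-!
Expanding the matrix product, `IMM_{n,n}` is the sum, over closed paths
`0 = p₀ → p₁ → ⋯ → pₙ = 0` in `{0, …, n-1}`, of the squarefree monomials
`∏ₖ x^{(k)}_{pₖ pₖ₊₁}`. An admissible set `S` is exactly the set of variables that such a path
uses at the even (`0`-based) steps, and these determine the path since every inner vertex is an
endpoint of an even step. Hence `∂_S IMM` is the single monomial formed by the odd steps of that
path. The odd steps determine the path as well, so the `n^(n-1)` closed paths give pairwise
distinct squarefree monomials, whose evaluation functions are linearly independent over any field
(evaluate at `0/1`-vectors).
-/

open Finset

theorem Matrix.list_ofFn_prod_apply {R ι : Type*} [CommSemiring R] [Fintype ι] [DecidableEq ι]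
    {N : ℕ} (M : Fin N → Matrix ι ι R) (i j : ι) :
    (List.ofFn M).prod i j = ∑ p : Fin (N + 1) → ι with p 0 = i ∧ p (Fin.last N) = j,
      ∏ k, M k (p k.castSucc) (p k.succ) := by
  rw [sum_filter]
  induction N generalizing i with
  | zero =>
    rw [← (Equiv.funUnique (Fin 1) ι).symm.sum_comp]
    simp [Matrix.one_apply, ite_and]
  | succ N ih =>
    rw [List.ofFn_succ, List.prod_cons, Matrix.mul_apply, ← (Fin.consEquiv fun _ => ι).sum_comp,
      Fintype.sum_prod_type]
    simp only [ih, ite_and, mul_sum, mul_ite, mul_zero, Fin.consEquiv_apply, Fin.cons_zero,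
      Fin.cons_last, Fin.cons_succ, Fin.prod_univ_succ, Fin.castSucc_zero, Fin.castSucc_succ,
      sum_ite_irrel, sum_const_zero, sum_ite_eq', mem_univ, if_true]
    rw [sum_comm]
    simp

section PartialDerivatives

variable {R σ : Type*} [CommSemiring R]

theorem pderivList_sum {ι : Type*} (l : List σ) (s : Finset ι) (f : ι → MvPolynomial σ R) :
    pderivList l (∑ i ∈ s, f i) = ∑ i ∈ s, pderivList l (f i) := by
  induction l with
  | nil => rfl
  | cons v l ih =>
    simp only [pderivList, List.foldr_cons] at ih ⊢
    rw [ih, map_sum]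

theorem pderivFinset_sum {ι : Type*} (S : Finset σ) (s : Finset ι) (f : ι → MvPolynomial σ R) :
    pderivFinset S (∑ i ∈ s, f i) = ∑ i ∈ s, pderivFinset S (f i) :=
  pderivList_sum S.toList s f

variable [DecidableEq σ]

theorem MvPolynomial.pderiv_prod_X (v : σ) (T : Finset σ) :
    pderiv v (∏ w ∈ T, X w : MvPolynomial σ R) = if v ∈ T then ∏ w ∈ T.erase v, X w else 0 := by
  induction T using Finset.induction_on with
  | empty => simp
  | insert a T ha ih =>
    rw [prod_insert ha, pderiv_mul, ih, pderiv_X]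
    by_cases hv : v = a
    · subst hv
      simp [ha]
    · simp [hv, Ne.symm hv, erase_insert_of_ne (Ne.symm hv), ha, mul_ite]

theorem pderivList_prod_X {l : List σ} (hl : l.Nodup) (T : Finset σ) :
    pderivList l (∏ w ∈ T, X w : MvPolynomial σ R) =
      if l.toFinset ⊆ T then ∏ w ∈ T \ l.toFinset, X w else 0 := by
  induction l with
  | nil => simp [pderivList]
  | cons v l ih =>
    obtain ⟨hvl, hl⟩ := List.nodup_cons.mp hl
    simp only [pderivList, List.foldr_cons] at ih ⊢
    rw [ih hl]
    split_ifs <;> simp_all [pderiv_prod_X, insert_subset_iff, sdiff_insert]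

theorem pderivFinset_prod_X_s11 (S T : Finset σ) :
    pderivFinset S (∏ w ∈ T, X w : MvPolynomial σ R) =
      if S ⊆ T then ∏ w ∈ T \ S, X w else 0 := by
  show pderivList S.toList _ = _
  simpa using pderivList_prod_X (R := R) (nodup_toList S) T

end PartialDerivatives

theorem linearIndependent_fun_finset_prod (K σ : Type*) [Field K] :
    LinearIndependent K fun T : Finset σ => fun x : σ → K => ∏ v ∈ T, x v := by
  classical
  rw [linearIndependent_iff']
  intro s c hsum
  by_contra! hne
  obtain ⟨T, hT, hmin⟩ := (s.filter (c · ≠ 0)).exists_min_image card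
    (by simpa [Finset.Nonempty] using hne)
  rw [mem_filter] at hT
  -- At the indicator vector of `T` only the `T' ⊆ T` survive, and of these only `T` itself has a
  -- nonzero coefficient, by minimality.
  have h := congrFun hsum fun v => if v ∈ T then 1 else 0
  simp only [Finset.sum_apply, Pi.smul_apply, smul_eq_mul, Pi.zero_apply, prod_boole] at h
  rw [sum_eq_single_of_mem T hT.1 ?_] at h
  · simp_all
  intro T' hT' hne
  by_cases hsub : ∀ v ∈ T', v ∈ T
  · have : c T' = 0 := by
      by_contra hc
      exact (hmin T' (mem_filter.2 ⟨hT', hc⟩)).not_gt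
        (card_lt_card (Finset.ssubset_iff_subset_ne.2 ⟨hsub, hne⟩))
    simp [this]
  · simp [hsub]

section ClosedWalks

variable {n : ℕ}

def pathEdge (p : Fin (n + 1) → Fin n) : Fin n ↪ Fin n × Fin n × Fin n :=
  ⟨fun k => (k, p k.castSucc, p k.succ), fun _ _ h => congrArg Prod.fst h⟩

@[simp]
theorem pathEdge_apply (p : Fin (n + 1) → Fin n) (k : Fin n) :
    pathEdge p k = (k, p k.castSucc, p k.succ) := rfl

theorem mem_map_pathEdge_univ {p p' : Fin (n + 1) → Fin n} {k : Fin n} :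
    pathEdge p k ∈ univ.map (pathEdge p') ↔ pathEdge p k = pathEdge p' k := by
  simp only [mem_map, mem_univ, true_and]
  refine ⟨fun ⟨k', hk'⟩ => ?_, fun h => ⟨k, h.symm⟩⟩
  obtain rfl : k' = k := congrArg Prod.fst hk'
  exact hk'.symm

def stepsOfParity (n r : ℕ) : Finset (Fin n) := {k | k.val % 2 = r}

theorem univ_sdiff_stepsOfParity_zero : univ \ stepsOfParity n 0 = stepsOfParity n 1 := by
  ext k
  simp [stepsOfParity]

def closedPaths (n : ℕ) [NeZero n] : Finset (Fin (n + 1) → Fin n) :=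
  {p | p 0 = 0 ∧ p (Fin.last n) = 0}

variable [NeZero n]

theorem card_closedPaths : #(closedPaths n) = n ^ (n - 1) := by
  have hpi : closedPaths n =
      Fintype.piFinset fun t => if t = 0 ∨ t = Fin.last n then {0} else univ := by
    ext p
    simp only [closedPaths, mem_filter, mem_univ, true_and, Fintype.mem_piFinset]
    refine ⟨fun ⟨h0, hl⟩ t => ?_, fun h => ⟨by simpa using h 0, by simpa using h (Fin.last n)⟩⟩
    split_ifs with ht
    · rcases ht with rfl | rfl <;> simpa
    · exact mem_univ _
  have hends : ({t | t = 0 ∨ t = Fin.last n} : Finset (Fin (n + 1))) = {0, Fin.last n} := by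
    ext
    simp
  rw [hpi, Fintype.card_piFinset]
  simp only [apply_ite card, card_singleton, card_univ, Fintype.card_fin]
  rw [prod_ite, prod_const_one, one_mul, prod_const, filter_not, card_sdiff, inter_univ, hends,
    card_pair Fin.last_pos'.ne, card_univ, Fintype.card_fin]
  congr 1

theorem eq_of_map_stepsOfParity_subset {r : ℕ} (hr : r < 2) {p p' : Fin (n + 1) → Fin n}
    (hp : p ∈ closedPaths n) (hp' : p' ∈ closedPaths n)
    (h : (stepsOfParity n r).map (pathEdge p) ⊆ univ.map (pathEdge p')) : p = p' := by
  simp only [closedPaths, mem_filter, mem_univ, true_and] at hp hp'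
  have agree (k : Fin n) (hk : k.val % 2 = r) :
      p k.castSucc = p' k.castSucc ∧ p k.succ = p' k.succ := by
    simpa using mem_map_pathEdge_univ.1 (h (mem_map_of_mem _ (by simpa [stepsOfParity] using hk)))
  funext ⟨t, ht⟩
  rcases Nat.eq_zero_or_pos t with rfl | ht0
  · exact hp.1.trans hp'.1.symm
  rcases Nat.lt_or_ge t n with htn | htn
  · by_cases hpar : t % 2 = r
    · exact (agree ⟨t, htn⟩ hpar).1
    · have hsucc : (⟨t - 1, by omega⟩ : Fin n).succ = ⟨t, ht⟩ := by
        ext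
        simp only [Fin.succ_mk]
        omega
      simpa [hsucc] using (agree ⟨t - 1, by omega⟩ (show (t - 1) % 2 = r by omega)).2
  · obtain rfl : t = n := by omega
    exact hp.2.trans hp'.2.symm

def pathOfEvenSteps (entry : Fin n → Fin n × Fin n) (t : Fin (n + 1)) : Fin n :=
  if ht : t.val < n then
    if t.val % 2 = 0 then (entry ⟨t, ht⟩).1 else (entry ⟨t - 1, by omega⟩).2
  else 0

theorem pathEdge_pathOfEvenSteps (hn : Even n) (entry : Fin n → Fin n × Fin n) {k : Fin n}
    (hk : k.val % 2 = 0) : pathEdge (pathOfEvenSteps entry) k = (k, entry k) := by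
  have hsucc : k.val + 1 < n := by
    obtain ⟨m, rfl⟩ := hn
    omega
  have hodd : (k.val + 1) % 2 ≠ 0 := by omega
  simp [pathOfEvenSteps, hk, hsucc, hodd]

theorem pathOfEvenSteps_mem_closedPaths (entry : Fin n → Fin n × Fin n) (h0 : (entry 0).1 = 0) :
    pathOfEvenSteps entry ∈ closedPaths n := by
  simpa [closedPaths, pathOfEvenSteps, NeZero.pos n] using h0

theorem IMM_eq_sum_closedPaths (R : Type*) [CommSemiring R] :
    IMM n R = ∑ p ∈ closedPaths n, ∏ v ∈ univ.map (pathEdge p), X v := by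
  rw [IMM, dif_pos (NeZero.pos n), ← List.ofFn_eq_map, Matrix.list_ofFn_prod_apply]
  simp only [Fin.mk_zero', Matrix.of_apply, closedPaths, prod_map, pathEdge_apply]
  rfl

theorem pderivFinset_IMM_of_mem_closedPaths (R : Type*) [CommSemiring R]
    {p : Fin (n + 1) → Fin n} (hp : p ∈ closedPaths n) :
    pderivFinset ((stepsOfParity n 0).map (pathEdge p)) (IMM n R) =
      ∏ v ∈ (stepsOfParity n 1).map (pathEdge p), X v := by
  rw [IMM_eq_sum_closedPaths, pderivFinset_sum, sum_eq_single_of_mem p hp]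
  · rw [pderivFinset_prod_X_s11, if_pos (map_subset_map.2 (subset_univ _)), ← Finset.map_sdiff,
      univ_sdiff_stepsOfParity_zero]
  · intro p' hp' hne
    rw [pderivFinset_prod_X_s11, if_neg]
    exact fun h => hne (eq_of_map_stepsOfParity_subset zero_lt_two hp hp' h).symm

theorem isAdmissible_map_pathEdge {p : Fin (n + 1) → Fin n} (hp : p ∈ closedPaths n) :
    IsAdmissible n ((stepsOfParity n 0).map (pathEdge p)) := by
  simp only [closedPaths, mem_filter, mem_univ, true_and] at hp
  refine ⟨?_, fun k hk => card_eq_one.2 ⟨pathEdge p k, ?_⟩, ?_⟩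
  · simp [stepsOfParity, Nat.even_iff]
  · ext v
    simp only [mem_filter, mem_map, stepsOfParity, mem_univ, true_and, mem_singleton]
    constructor
    · rintro ⟨⟨a, -, rfl⟩, rfl⟩
      rfl
    · rintro rfl
      exact ⟨⟨k, Nat.even_iff.1 hk, rfl⟩, rfl⟩
  · simp only [mem_map, pathEdge_apply]
    rintro _ ⟨k, -, rfl⟩ (hk : k.val = 0)
    obtain rfl : k = 0 := Fin.ext hk
    exact congrArg Fin.val hp.1

theorem exists_closedPath_of_isAdmissible (hn : Even n) {S : Finset (Fin n × Fin n × Fin n)}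
    (hS : IsAdmissible n S) : ∃ p ∈ closedPaths n, S = (stepsOfParity n 0).map (pathEdge p) := by
  obtain ⟨hpar, hone, hfirst⟩ := hS
  have hentry (k : Fin n) : ∃ ij, k.val % 2 = 0 → (k, ij) ∈ S := by
    by_cases hk : k.val % 2 = 0
    · obtain ⟨v, hv⟩ := card_eq_one.1 (hone k (Nat.even_iff.2 hk))
      have hv' : v ∈ S ∧ v.1 = k := by simpa using mem_filter.1 (hv ▸ mem_singleton_self v)
      exact ⟨v.2, fun _ => hv'.2 ▸ hv'.1⟩
    · exact ⟨(0, 0), fun h => absurd h hk⟩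
  choose entry hentry using hentry
  have hS_eq (v) (hv : v ∈ S) : v = (v.1, entry v.1) :=
    card_le_one.1 (hone v.1 (hpar v hv)).le v (by simp [hv]) _
      (by simp [hentry v.1 (Nat.even_iff.1 (hpar v hv))])
  refine ⟨pathOfEvenSteps entry,
    pathOfEvenSteps_mem_closedPaths entry (Fin.ext (hfirst _ (hentry 0 (by simp)) rfl)), ?_⟩
  ext v
  constructor
  · intro hv
    have hk := Nat.even_iff.1 (hpar v hv)
    rw [hS_eq v hv, ← pathEdge_pathOfEvenSteps hn entry hk]
    exact mem_map_of_mem _ (by simp [stepsOfParity, hk])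
  · simp only [mem_map, stepsOfParity, mem_filter, mem_univ, true_and]
    rintro ⟨k, hk, rfl⟩
    rw [pathEdge_pathOfEvenSteps hn entry hk]
    exact hentry k hk

theorem admissibleDerivatives_eq_range (K : Type*) [Field K] (hn : Even n) :
    {g : (Fin n × Fin n × Fin n → K) → K | ∃ S, IsAdmissible n S ∧
        g = fun x => eval x (pderivFinset S (IMM n K))} =
      Set.range fun p : closedPaths n =>
        fun x => ∏ v ∈ (stepsOfParity n 1).map (pathEdge p.1), x v := by
  ext g
  constructor
  · rintro ⟨S, hS, rfl⟩
    obtain ⟨p, hp, rfl⟩ := exists_closedPath_of_isAdmissible hn hS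
    exact ⟨⟨p, hp⟩, by simp [pderivFinset_IMM_of_mem_closedPaths K hp]⟩
  · rintro ⟨⟨p, hp⟩, rfl⟩
    exact ⟨_, isAdmissible_map_pathEdge hp, by simp [pderivFinset_IMM_of_mem_closedPaths K hp]⟩

theorem finrank_span_admissibleDerivatives (K : Type*) [Field K] (hn : Even n) :
    Module.finrank K (Submodule.span K {g : (Fin n × Fin n × Fin n → K) → K | ∃ S,
        IsAdmissible n S ∧ g = fun x => eval x (pderivFinset S (IMM n K))}) = n ^ (n - 1) := by
  have hinj : Function.Injective fun p : closedPaths n => (stepsOfParity n 1).map (pathEdge p.1) :=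
    fun p q h => Subtype.ext <| eq_of_map_stepsOfParity_subset one_lt_two p.2 q.2 <|
      (subset_of_eq h).trans (map_subset_map.2 (subset_univ _))
  have hli : LinearIndependent K fun p : closedPaths n =>
      fun x : Fin n × Fin n × Fin n → K => ∏ v ∈ (stepsOfParity n 1).map (pathEdge p.1), x v :=
    (linearIndependent_fun_finset_prod K _).comp _ hinj
  rw [admissibleDerivatives_eq_range K hn, finrank_span_eq_card hli, Fintype.card_coe,
    card_closedPaths]

end ClosedWalks

/-- For `n = 2m`, the `F_q`-span of the evaluation functions of the monomials
`m_S = ∂IMM_{n,n}/∂S`, over admissible sets `S`, has dimension exactly `n^(n−1)`;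
consequently the `F_q`-span of the evaluation functions of all partial derivatives of
`IMM_{n,n}` (over `F_q`) has dimension at least `n^(n−1)`. -/
theorem IMM_derivative_space_dimension
    (m : ℕ) (hm : 0 < m) (Fq : Type*) [Field Fq] [Fintype Fq] (n : ℕ) (hn : n = 2 * m) :
    Module.finrank Fq ↥(Submodule.span Fq
      {g : (Fin n × Fin n × Fin n → Fq) → Fq | ∃ S : Finset (Fin n × Fin n × Fin n),
        IsAdmissible n S ∧ g = fun x => MvPolynomial.eval x (pderivFinset S (IMM n Fq))})
      = n ^ (n - 1) ∧
    n ^ (n - 1) ≤ Module.finrank Fq ↥(Submodule.span Fq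
      {g : (Fin n × Fin n × Fin n → Fq) → Fq | ∃ l : List (Fin n × Fin n × Fin n),
        g = fun x => MvPolynomial.eval x (pderivList l (IMM n Fq))}) := by
  have : NeZero n := ⟨by omega⟩
  have hrank := finrank_span_admissibleDerivatives Fq (n := n) ⟨m, by omega⟩
  refine ⟨hrank, hrank ▸ Submodule.finrank_mono (Submodule.span_mono ?_)⟩
  rintro g ⟨S, -, rfl⟩
  exact ⟨S.toList, rfl⟩
end
end
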